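/- arXiv:2406.17344 — 2 statements merged into one kernel-verified Lean document; each statement's English description precedes it below -/
import Mathlib

section
/- Let b be a weighted graph over V with values in an ordered field, U ⊆ V, π = π_U^b, and x, y ∈ U with x → y with respect to π. Then y → x if and only if b(x) ≃ b(y). -/
open Classical
open scoped ENNReal

namespace NAG

/-- The real part of an at most finite element of an ordered field:
the supremum of the rationals below it. -/
noncomputable def rp {K : Type*} [Field K] [LinearOrder K] [IsStrictOrderedRing K] (k : K) : ℝ :=
  sSup {r : ℝ | ∃ q : ℚ, r = (q : ℝ) ∧ (q : K) ≤ k}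

/-- `k₁ ≃ k₂` : the quotient is bounded above and below by positive rationals. -/
def Comparable {K : Type*} [Field K] [LinearOrder K] [IsStrictOrderedRing K] (k₁ k₂ : K) : Prop :=
  ∃ c₁ c₂ : ℚ, 0 < c₁ ∧ 0 < c₂ ∧ (c₁ : K) < k₁ / k₂ ∧ k₁ / k₂ < (c₂ : K)

/-- `k₁ ≺≺ k₂` : the quotient is smaller than every positive rational. -/
def MuchLT {K : Type*} [Field K] [LinearOrder K] [IsStrictOrderedRing K] (k₁ k₂ : K) : Prop :=
  ∀ c : ℚ, 0 < c → k₁ / k₂ < (c : K)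

/-- `k₁ ≾ k₂` : the quotient is bounded above by some positive rational. -/
def LessSim {K : Type*} [Field K] [LinearOrder K] [IsStrictOrderedRing K] (k₁ k₂ : K) : Prop :=
  ∃ c : ℚ, 0 < c ∧ k₁ / k₂ < (c : K)

/-- A (locally finite) weighted graph over `V` with values in an ordered field `K`. -/
structure Graph (V K : Type*) [Field K] [LinearOrder K] [IsStrictOrderedRing K] where
  w : V → V → K
  symm : ∀ x y, w x y = w y x
  nonneg : ∀ x y, 0 ≤ w x y
  loopless : ∀ x, w x x = 0
  locFin : ∀ x, {y | w x y ≠ 0}.Finite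

variable {V K : Type*} [Field K] [LinearOrder K] [IsStrictOrderedRing K]

/-- `b(x) = Σ_y b(x,y)`. -/
noncomputable def Graph.deg (G : Graph V K) (x : V) : K := ∑ᶠ y, G.w x y

def Graph.Adj (G : Graph V K) (x y : V) : Prop := 0 < G.w x y

def Graph.Connected (G : Graph V K) : Prop :=
  ∀ x y : V, ∃ (n : ℕ) (p : ℕ → V), p 0 = x ∧ p n = y ∧ ∀ i < n, G.Adj (p i) (p (i + 1))

def Graph.ConnectedOn (G : Graph V K) (S : Set V) : Prop :=
  ∀ x ∈ S, ∀ y ∈ S, ∃ (n : ℕ) (p : ℕ → V),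
    p 0 = x ∧ p n = y ∧ (∀ i ≤ n, p i ∈ S) ∧ ∀ i < n, G.Adj (p i) (p (i + 1))

/-- normalized weight `p(x,y) = b(x,y)/b(x)`. -/
noncomputable def Graph.p (G : Graph V K) (x y : V) : K := G.w x y / G.deg x

/-- The real transition matrix `π_U^b`. -/
noncomputable def Graph.pi (G : Graph V K) (U : Set V) (x y : V) : ℝ :=
  if x ∈ U then rp (G.p x y) else if x = y then 1 else 0

/-- A directed path of length `n` from `x` to `y` for a real kernel `m`. -/
def DirPath {V : Type*} (m : V → V → ℝ) (x y : V) (n : ℕ) (p : ℕ → V) : Prop :=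
  p 0 = x ∧ p n = y ∧ ∀ i < n, 0 < m (p i) (p (i + 1))

/-- `x → y` : reachability by directed paths. -/
def Reaches {V : Type*} (m : V → V → ℝ) (x y : V) : Prop :=
  x = y ∨ ∃ n p, DirPath m x y n p

/-- `x ↔ y` : mutual reachability (same strongly connected component). -/
def SameSCC {V : Type*} (m : V → V → ℝ) (x y : V) : Prop :=
  Reaches m x y ∧ Reaches m y x

/-!
Along a `π`-edge `u → v` with `u ∈ U` the weight `b(u,v)` is at least a positive rational multiple of
`b(u)`, while `b(u,v) ≤ b(v)`; off `U` the kernel `π` only has loops. Hence `b(u) ≾ b(v)` along every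
edge, so `b` can drop by at most a rational factor along a path, which gives the forward direction.
Conversely, if `b(y) ≾ b(x)`, every vertex of a path from `x` to `y` has degree comparable to its
successor, and since `b(u,v) = b(v,u)` a non-infinitesimal edge between comparable vertices is
non-infinitesimal in both directions: the path can be walked backwards.
-/

open Relation

theorem reflTransGen_iff_exists_seq {α : Type*} {r : α → α → Prop} {x y : α} :
    ReflTransGen r x y ↔
      ∃ (n : ℕ) (p : ℕ → α), p 0 = x ∧ p n = y ∧ ∀ i < n, r (p i) (p (i + 1)) := by
  constructor
  · intro h
    induction h using ReflTransGen.head_induction_on with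
    | refl => exact ⟨0, fun _ => y, rfl, rfl, by simp⟩
    | @head a c hac _ ih =>
      obtain ⟨n, p, rfl, hpn, hp⟩ := ih
      refine ⟨n + 1, fun | 0 => a | i + 1 => p i, rfl, hpn, ?_⟩
      rintro (_ | i) hi
      · exact hac
      · exact hp i (by omega)
  · rintro ⟨n, p, rfl, rfl, hp⟩
    induction n generalizing p with
    | zero => rfl
    | succ n ih =>
      exact .head (hp 0 n.succ_pos) (ih (fun i => p (i + 1)) fun i hi => hp (i + 1) (by omega))

theorem reaches_iff_reflTransGen {m : V → V → ℝ} {x y : V} :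
    Reaches m x y ↔ ReflTransGen (fun a b => 0 < m a b) x y := by
  refine ⟨?_, fun h => Or.inr (reflTransGen_iff_exists_seq.mp h)⟩
  rintro (rfl | h)
  · exact .refl
  · exact reflTransGen_iff_exists_seq.mpr h

-- The bound matters: for an infinite `k` the set is unbounded and `sSup` returns the junk value `0`.
theorem rp_pos_iff {k : K} (hk : ∃ b : ℚ, k ≤ b) : 0 < rp k ↔ ∃ q : ℚ, 0 < q ∧ (q : K) ≤ k := by
  constructor
  · intro h
    by_contra! hsmall
    refine h.not_ge (Real.sSup_nonpos ?_)
    rintro _ ⟨q, rfl, hq⟩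
    by_contra! hq0
    exact (hsmall q (by exact_mod_cast hq0)).not_ge hq
  · rintro ⟨q, hq, hqk⟩
    obtain ⟨b, hkb⟩ := hk
    have hbdd : BddAbove {r : ℝ | ∃ q : ℚ, r = q ∧ (q : K) ≤ k} := by
      refine ⟨b, ?_⟩
      rintro _ ⟨q', rfl, hq'⟩
      exact_mod_cast hq'.trans hkb
    exact (Rat.cast_pos.mpr hq).trans_le (le_csSup hbdd ⟨q, rfl, hqk⟩)

theorem lessSim_iff {a b : K} (hb : 0 < b) : LessSim a b ↔ ∃ c : ℚ, 0 < c ∧ a < c * b := by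
  simp only [LessSim, div_lt_iff₀ hb]

theorem lessSim_refl {a : K} (ha : 0 < a) : LessSim a a :=
  (lessSim_iff ha).mpr ⟨2, two_pos, by push_cast; linarith⟩

theorem LessSim.trans {a b c : K} (hb : 0 < b) (hc : 0 < c) (hab : LessSim a b)
    (hbc : LessSim b c) : LessSim a c := by
  obtain ⟨d₁, hd₁, hab⟩ := (lessSim_iff hb).mp hab
  obtain ⟨d₂, hd₂, hbc⟩ := (lessSim_iff hc).mp hbc
  refine (lessSim_iff hc).mpr ⟨d₁ * d₂, mul_pos hd₁ hd₂, ?_⟩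
  calc a < d₁ * b := hab
    _ < d₁ * (d₂ * c) := mul_lt_mul_of_pos_left hbc (by exact_mod_cast hd₁)
    _ = ((d₁ * d₂ : ℚ) : K) * c := by push_cast; ring

theorem comparable_iff_lessSim_and_lessSim {a b : K} (ha : 0 < a) (hb : 0 < b) :
    Comparable a b ↔ LessSim a b ∧ LessSim b a := by
  simp only [Comparable, lessSim_iff ha, lessSim_iff hb, lt_div_iff₀ hb, div_lt_iff₀ hb]
  constructor
  · rintro ⟨c₁, c₂, hc₁, hc₂, h₁, h₂⟩
    refine ⟨⟨c₂, hc₂, h₂⟩, c₁⁻¹, inv_pos.mpr hc₁, ?_⟩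
    rwa [Rat.cast_inv, lt_inv_mul_iff₀ (by exact_mod_cast hc₁)]
  · rintro ⟨⟨c₂, hc₂, h₂⟩, c, hc, h⟩
    refine ⟨c⁻¹, c₂, inv_pos.mpr hc, hc₂, ?_, h₂⟩
    rwa [Rat.cast_inv, inv_mul_lt_iff₀ (by exact_mod_cast hc)]

namespace Graph

variable (G : Graph V K) {U : Set V}

theorem w_le_deg (u v : V) : G.w u v ≤ G.deg u :=
  single_le_finsum v (G.locFin u) (G.nonneg u)

theorem pi_pos_iff {u v : V} (hu : u ∈ U) (hdeg : 0 < G.deg u) :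
    0 < G.pi U u v ↔ ∃ q : ℚ, 0 < q ∧ (q : K) * G.deg u ≤ G.w u v := by
  have hp : G.p u v ≤ ((1 : ℚ) : K) := by
    rw [Rat.cast_one, p, div_le_one hdeg]
    exact G.w_le_deg u v
  rw [pi, if_pos hu, rp_pos_iff ⟨1, hp⟩]
  simp only [p, le_div_iff₀ hdeg]

theorem eq_of_pi_pos_of_notMem {u v : V} (hu : u ∉ U) (h : 0 < G.pi U u v) : v = u := by
  by_contra hvu
  simp [pi, hu, Ne.symm hvu] at h

theorem eq_of_reflTransGen_of_notMem {u v : V} (hu : u ∉ U)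
    (h : ReflTransGen (fun a b => 0 < G.pi U a b) u v) : v = u := by
  induction h with
  | refl => rfl
  | tail _ hvw ih =>
    subst ih
    exact G.eq_of_pi_pos_of_notMem hu hvw

variable {G} (hdeg : ∀ x, 0 < G.deg x)
include hdeg

theorem lessSim_deg_of_pi_pos {u v : V} (hu : u ∈ U) (h : 0 < G.pi U u v) :
    LessSim (G.deg u) (G.deg v) := by
  obtain ⟨q, hq, hqw⟩ := (G.pi_pos_iff hu (hdeg u)).mp h
  have hqK : (0 : K) < q := by exact_mod_cast hq
  have hwv : G.w u v ≤ G.deg v := G.symm u v ▸ G.w_le_deg v u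
  refine (lessSim_iff (hdeg v)).mpr ⟨q⁻¹ + 1, by positivity, ?_⟩
  calc G.deg u ≤ (q : K)⁻¹ * G.deg v := (le_inv_mul_iff₀ hqK).mpr (hqw.trans hwv)
    _ < (q : K)⁻¹ * G.deg v + G.deg v := lt_add_of_pos_right _ (hdeg v)
    _ = ((q⁻¹ + 1 : ℚ) : K) * G.deg v := by push_cast; ring

theorem pi_pos_symm {u v : V} (hu : u ∈ U) (hv : v ∈ U) (h : 0 < G.pi U u v)
    (hvu : LessSim (G.deg v) (G.deg u)) : 0 < G.pi U v u := by
  obtain ⟨q, hq, hqw⟩ := (G.pi_pos_iff hu (hdeg u)).mp h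
  obtain ⟨c, hc, hvu⟩ := (lessSim_iff (hdeg u)).mp hvu
  have hcK : (0 : K) < c := by exact_mod_cast hc
  refine (G.pi_pos_iff hv (hdeg v)).mpr ⟨q / c, div_pos hq hc, ?_⟩
  calc ((q / c : ℚ) : K) * G.deg v ≤ (q / c : K) * (c * G.deg u) := by
        push_cast
        exact mul_le_mul_of_nonneg_left hvu.le (by positivity)
    _ = q * G.deg u := by field_simp
    _ ≤ G.w v u := G.symm u v ▸ hqw

theorem lessSim_deg_of_reflTransGen {u v : V}
    (h : ReflTransGen (fun a b => 0 < G.pi U a b) u v) : LessSim (G.deg u) (G.deg v) := by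
  induction h with
  | refl => exact lessSim_refl (hdeg u)
  | @tail v w _ hvw ih =>
    by_cases hv : v ∈ U
    · exact ih.trans (hdeg v) (hdeg w) (lessSim_deg_of_pi_pos hdeg hv hvw)
    · rwa [G.eq_of_pi_pos_of_notMem hv hvw]

theorem reflTransGen_symm_of_lessSim {u v : V}
    (h : ReflTransGen (fun a b => 0 < G.pi U a b) u v) (hv : v ∈ U)
    (hvu : LessSim (G.deg v) (G.deg u)) : ReflTransGen (fun a b => 0 < G.pi U a b) v u := by
  induction h using ReflTransGen.head_induction_on with
  | refl => exact .refl
  | @head u w huw hwv ih =>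
    by_cases hu : u ∈ U
    · have hw : w ∈ U := by
        by_contra hw
        exact hw (G.eq_of_reflTransGen_of_notMem hw hwv ▸ hv)
      have huw' := lessSim_deg_of_pi_pos hdeg hu huw
      have hwu : LessSim (G.deg w) (G.deg u) :=
        (lessSim_deg_of_reflTransGen hdeg hwv).trans (hdeg v) (hdeg u) hvu
      exact (ih (hvu.trans (hdeg u) (hdeg w) huw')).tail (pi_pos_symm hdeg hu hw huw hwu)
    · obtain rfl := G.eq_of_pi_pos_of_notMem hu huw
      exact ih hvu

end Graph

theorem reaches_back_iff_general {V K : Type*} [Field K] [LinearOrder K] [IsStrictOrderedRing K]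
    (G : Graph V K) (hdeg : ∀ x, 0 < G.deg x)
    (U : Set V) (x y : V) (hy : y ∈ U)
    (hxy : Reaches (G.pi U) x y) :
    Reaches (G.pi U) y x ↔ Comparable (G.deg x) (G.deg y) := by
  rw [reaches_iff_reflTransGen] at hxy ⊢
  rw [comparable_iff_lessSim_and_lessSim (hdeg x) (hdeg y)]
  refine ⟨fun hyx => ?_, fun ⟨_, hyx⟩ => G.reflTransGen_symm_of_lessSim hdeg hxy hy hyx⟩
  exact ⟨G.lessSim_deg_of_reflTransGen hdeg hxy, G.lessSim_deg_of_reflTransGen hdeg hyx⟩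

/-- for `x, y ∈ U` with `x → y`, one has `y → x` iff `b(x) ≃ b(y)`. -/
theorem reaches_back_iff {V K : Type*} [Field K] [LinearOrder K] [IsStrictOrderedRing K] [Countable V]
    (G : Graph V K) (hconn : G.Connected) (hdeg : ∀ x, 0 < G.deg x)
    (U : Set V) (x y : V) (hx : x ∈ U) (hy : y ∈ U)
    (hxy : Reaches (G.pi U) x y) :
    Reaches (G.pi U) y x ↔ Comparable (G.deg x) (G.deg y) :=
  reaches_back_iff_general G hdeg U x y hy hxy

end NAG
end

section
/- Let b be a connected locally finite weighted graph over V with values in an ordered field, K ⊆ L ⊆ V finite connected sets, and a ∈ K. Then cap_L(a)/b(a) ⪯ cap_K(a)/b(a) ⪯ 1, and hence the reciprocals of the real parts satisfy 1/ρ(cap_L(a)/b(a)) ≥ 1/ρ(cap_K(a)/b(a)) ≥ 1. -/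
open Classical
open scoped ENNReal

namespace NAG

variable {V K : Type*} [Field K] [LinearOrder K] [IsStrictOrderedRing K]

/-- The Laplacian `Δf(x) = (1/b(x)) Σ_y b(x,y)(f(x) − f(y))`. -/
noncomputable def Graph.lap (G : Graph V K) (f : V → K) (x : V) : K :=
  (∑ᶠ y, G.w x y * (f x - f y)) / G.deg x

/-- `v` solves the Dirichlet problem for the finite set `S` and `a ∈ S`. -/
def Graph.IsDirichletSol (G : Graph V K) (S : Finset V) (a : V) (v : V → K) : Prop :=
  v a = 1 ∧ (∀ x ∈ S, x ≠ a → G.lap v x = 0) ∧ ∀ x ∉ S, v x = 0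

/-! Both the sign of the Dirichlet solutions and their monotonicity in the set come from one
minimum principle: a function with `Δu ≥ 0` on a connected finite set minus `a` that is nonnegative
at `a` and off the set cannot have a negative minimum, since the minimum would spread along a path
to `a`. With `0 ≤ v_K ≤ v_L ≤ 1` and `v_K(a) = v_L(a) = 1`, comparing
`Δv(a) = (1/b(a)) Σ_y b(a,y)(1 − v(y))` termwise gives `0 ≤ Δv_L(a) ≤ Δv_K(a) ≤ 1`, and `ρ` is
monotone on `[0, 1]`. -/

namespace Graph

variable (G : Graph V K)

noncomputable def neighborFinset (x : V) : Finset V := (G.locFin x).toFinset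

lemma mem_neighborFinset {x y : V} : y ∈ G.neighborFinset x ↔ G.w x y ≠ 0 := by
  simp [neighborFinset]

lemma finsum_eq_sum_neighborFinset (x : V) (f : V → K) :
    ∑ᶠ y, G.w x y * f y = ∑ y ∈ G.neighborFinset x, G.w x y * f y := by
  refine finsum_eq_finsetSum_of_support_subset _ fun y hy => ?_
  rw [Finset.mem_coe, mem_neighborFinset]
  exact left_ne_zero_of_mul hy

lemma deg_eq_sum (x : V) : G.deg x = ∑ y ∈ G.neighborFinset x, G.w x y := by
  simpa [deg] using G.finsum_eq_sum_neighborFinset x 1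

lemma deg_nonneg (x : V) : 0 ≤ G.deg x := by
  rw [deg_eq_sum]
  exact Finset.sum_nonneg fun y _ => G.nonneg x y

lemma lap_eq_sum (f : V → K) (x : V) :
    G.lap f x = (∑ y ∈ G.neighborFinset x, G.w x y * (f x - f y)) / G.deg x :=
  congrArg (· / G.deg x) (G.finsum_eq_sum_neighborFinset x fun y => f x - f y)

@[simp]
lemma lap_const (c : K) (x : V) : G.lap (fun _ => c) x = 0 := by
  simp [lap]

lemma lap_sub (f g : V → K) (x : V) : G.lap (f - g) x = G.lap f x - G.lap g x := by
  simp only [lap_eq_sum, ← sub_div, ← Finset.sum_sub_distrib, Pi.sub_apply]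
  congr 1
  exact Finset.sum_congr rfl fun y _ => by ring

lemma lap_le_lap {f g : V → K} {x : V} (h : ∀ y, f x - f y ≤ g x - g y) :
    G.lap f x ≤ G.lap g x := by
  rw [lap_eq_sum, lap_eq_sum]
  exact div_le_div_of_nonneg_right (Finset.sum_le_sum fun y _ =>
    mul_le_mul_of_nonneg_left (h y) (G.nonneg x y)) (G.deg_nonneg x)

lemma lap_nonneg_of_forall_le {f : V → K} {x : V} (h : ∀ y, f y ≤ f x) : 0 ≤ G.lap f x := by
  simpa using G.lap_le_lap (f := fun _ => f x) fun y => by simpa using h y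

lemma lap_nonpos_of_forall_le {f : V → K} {x : V} (h : ∀ y, f x ≤ f y) : G.lap f x ≤ 0 := by
  simpa using G.lap_le_lap (g := fun _ => f x) fun y => by simpa using h y

lemma lap_le_self {f : V → K} {x : V} (hf : ∀ y, 0 ≤ f y) (hx : 0 < G.deg x) :
    G.lap f x ≤ f x := by
  rw [lap_eq_sum, div_le_iff₀ hx, deg_eq_sum, Finset.mul_sum]
  exact Finset.sum_le_sum fun y _ => by nlinarith [G.nonneg x y, hf y]

lemma apply_eq_of_adj_of_forall_le {u : V → K} {x y : V} (hx : 0 < G.deg x)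
    (hmin : ∀ z, u x ≤ u z) (hlap : 0 ≤ G.lap u x) (hxy : G.Adj x y) : u y = u x := by
  have hterm : ∀ z ∈ G.neighborFinset x, G.w x z * (u x - u z) ≤ 0 := fun z _ =>
    mul_nonpos_of_nonneg_of_nonpos (G.nonneg x z) (sub_nonpos.mpr (hmin z))
  have hsum : ∑ z ∈ G.neighborFinset x, G.w x z * (u x - u z) = 0 := by
    rw [lap_eq_sum, div_nonneg_iff] at hlap
    refine le_antisymm (Finset.sum_nonpos hterm) ?_
    rcases hlap with ⟨h, -⟩ | ⟨-, h⟩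
    · exact h
    · exact absurd h hx.not_ge
  have hy : y ∈ G.neighborFinset x := G.mem_neighborFinset.mpr hxy.ne'
  rcases mul_eq_zero.mp ((Finset.sum_eq_zero_iff_of_nonpos hterm).mp hsum y hy) with h | h
  · exact absurd h hxy.ne'
  · exact (sub_eq_zero.mp h).symm

variable {G}

lemma ConnectedOn.apply_eq_of_forall_le {S : Set V} (hS : G.ConnectedOn S)
    (hdeg : ∀ x, 0 < G.deg x) {u : V → K} {a x : V} (ha : a ∈ S) (hx : x ∈ S)
    (hmin : ∀ z, u x ≤ u z) (hlap : ∀ z ∈ S, z ≠ a → 0 ≤ G.lap u z) : u a = u x := by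
  by_contra hne
  obtain ⟨n, p, hp0, hpn, hpS, hadj⟩ := hS x hx a ha
  have hpath : ∀ i ≤ n, u (p i) = u x := by
    intro i
    induction i with
    | zero => exact fun _ => by rw [hp0]
    | succ i ih =>
      intro hi
      have hpi := ih (by omega)
      have hpia : p i ≠ a := fun h => hne (h ▸ hpi)
      rw [← hpi] at hmin ⊢
      exact G.apply_eq_of_adj_of_forall_le (hdeg _) hmin
        (hlap _ (hpS i (by omega)) hpia) (hadj i (by omega))
  exact hne (hpn ▸ hpath n le_rfl)

lemma ConnectedOn.nonneg_of_lap_nonneg {S : Finset V} (hS : G.ConnectedOn ↑S)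
    (hdeg : ∀ x, 0 < G.deg x) {u : V → K} {a : V} (ha : a ∈ S)
    (hua : 0 ≤ u a) (hout : ∀ x ∉ S, 0 ≤ u x) (hlap : ∀ x ∈ S, x ≠ a → 0 ≤ G.lap u x)
    (x : V) : 0 ≤ u x := by
  obtain ⟨m, hmS, hm⟩ := S.exists_min_image u ⟨a, ha⟩
  by_contra! hneg
  have hmneg : u m < 0 := by
    by_cases hxS : x ∈ S
    · exact (hm x hxS).trans_lt hneg
    · exact absurd (hout x hxS) hneg.not_ge
  have hmin : ∀ z, u m ≤ u z := fun z => by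
    by_cases hz : z ∈ S
    · exact hm z hz
    · exact hmneg.le.trans (hout z hz)
  have := hS.apply_eq_of_forall_le hdeg ha hmS hmin hlap
  linarith

namespace IsDirichletSol

variable {S T : Finset V} {a : V} {v w : V → K}

lemma nonneg (hv : G.IsDirichletSol S a v) (hS : G.ConnectedOn ↑S) (hdeg : ∀ x, 0 < G.deg x)
    (ha : a ∈ S) (x : V) : 0 ≤ v x :=
  hS.nonneg_of_lap_nonneg hdeg ha (hv.1 ▸ zero_le_one) (fun y hy => (hv.2.2 y hy).ge)
    (fun y hy hya => (hv.2.1 y hy hya).ge) x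

lemma le_one (hv : G.IsDirichletSol S a v) (hS : G.ConnectedOn ↑S) (hdeg : ∀ x, 0 < G.deg x)
    (ha : a ∈ S) (x : V) : v x ≤ 1 := by
  have hlap : ∀ y ∈ S, y ≠ a → 0 ≤ G.lap ((fun _ => 1) - v) y := fun y hy hya => by
    rw [lap_sub, lap_const, hv.2.1 y hy hya, sub_zero]
  have := hS.nonneg_of_lap_nonneg hdeg ha (by simp [hv.1])
    (fun y hy => by simp [hv.2.2 y hy]) hlap x
  simpa using this

lemma le_of_subset (hv : G.IsDirichletSol S a v) (hw : G.IsDirichletSol T a w) (hST : S ⊆ T)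
    (hS : G.ConnectedOn ↑S) (hT : G.ConnectedOn ↑T) (hdeg : ∀ x, 0 < G.deg x) (ha : a ∈ S)
    (x : V) : v x ≤ w x := by
  have hlap : ∀ y ∈ T, y ≠ a → 0 ≤ G.lap (w - v) y := fun y hy hya => by
    rw [lap_sub, hw.2.1 y hy hya, zero_sub, neg_nonneg]
    by_cases hyS : y ∈ S
    · exact (hv.2.1 y hyS hya).le
    · -- off `S`, `v` vanishes and so attains its minimum
      refine G.lap_nonpos_of_forall_le fun z => ?_
      rw [hv.2.2 y hyS]
      exact hv.nonneg hS hdeg ha z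
  have := hT.nonneg_of_lap_nonneg hdeg (hST ha) (by simp [hv.1, hw.1])
    (fun y hy => by simp [hw.2.2 y hy, hv.2.2 y fun h => hy (hST h)]) hlap x
  simpa using this

end IsDirichletSol

end Graph

lemma rp_le_one {k : K} (hk : k ≤ 1) : rp k ≤ 1 := by
  refine Real.sSup_le ?_ zero_le_one
  rintro r ⟨q, rfl, hq⟩
  exact_mod_cast (show (q : K) ≤ 1 from hq.trans hk)

lemma rp_mono {k₁ k₂ : K} (h : k₁ ≤ k₂) (h₁ : ∃ q : ℚ, (q : K) ≤ k₁) (h₂ : ∃ q : ℚ, k₂ ≤ q) :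
    rp k₁ ≤ rp k₂ := by
  obtain ⟨q₁, hq₁⟩ := h₁
  obtain ⟨q₂, hq₂⟩ := h₂
  refine csSup_le_csSup ⟨q₂, ?_⟩ ⟨q₁, q₁, rfl, hq₁⟩ ?_
  · rintro r ⟨q, rfl, hq⟩
    exact_mod_cast (show (q : K) ≤ q₂ from hq.trans hq₂)
  · rintro r ⟨q, rfl, hq⟩
    exact ⟨q, rfl, hq.trans h⟩

theorem cap_monotone_and_G_general {V K : Type*} [Field K] [LinearOrder K] [IsStrictOrderedRing K]
    (G : Graph V K) (hdeg : ∀ x, 0 < G.deg x)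
    (SK SL : Finset V) (hKL : SK ⊆ SL)
    (hcK : G.ConnectedOn ↑SK) (hcL : G.ConnectedOn ↑SL)
    (a : V) (ha : a ∈ SK)
    (vK vL : V → K)
    (hvK : G.IsDirichletSol SK a vK) (hvL : G.IsDirichletSol SL a vL) :
    (G.lap vL a * G.deg a) / G.deg a ≤ (G.lap vK a * G.deg a) / G.deg a ∧
    (G.lap vK a * G.deg a) / G.deg a ≤ 1 ∧
    (1 : ℝ≥0∞) ≤ (ENNReal.ofReal (rp ((G.lap vK a * G.deg a) / G.deg a)))⁻¹ ∧
    (ENNReal.ofReal (rp ((G.lap vK a * G.deg a) / G.deg a)))⁻¹ ≤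
      (ENNReal.ofReal (rp ((G.lap vL a * G.deg a) / G.deg a)))⁻¹ := by
  simp only [mul_div_cancel_right₀ _ (hdeg a).ne']
  have hLK : G.lap vL a ≤ G.lap vK a :=
    G.lap_le_lap fun y => by
      rw [hvK.1, hvL.1]
      linarith [hvK.le_of_subset hvL hKL hcK hcL hdeg ha y]
  have hK1 : G.lap vK a ≤ 1 :=
    hvK.1 ▸ G.lap_le_self (hvK.nonneg hcK hdeg ha) (hdeg a)
  have hL0 : 0 ≤ G.lap vL a :=
    G.lap_nonneg_of_forall_le fun y => hvL.1 ▸ hvL.le_one hcL hdeg (hKL ha) y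
  refine ⟨hLK, hK1, ENNReal.one_le_inv.mpr (ENNReal.ofReal_le_one.mpr (rp_le_one hK1)), ?_⟩
  exact ENNReal.inv_le_inv' (ENNReal.ofReal_le_ofReal
    (rp_mono hLK ⟨0, by simpa using hL0⟩ ⟨1, by simpa using hK1⟩))

/-- for finite connected `K ⊆ L` and `a ∈ K`,
`cap_L(a)/b(a) ⪯ cap_K(a)/b(a) ⪯ 1` and
`1/ρ(cap_L(a)/b(a)) ≥ 1/ρ(cap_K(a)/b(a)) ≥ 1` (in `[0,∞]`). -/
theorem cap_monotone_and_G {V K : Type*} [Field K] [LinearOrder K] [IsStrictOrderedRing K] [Countable V]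
    (G : Graph V K) (hconn : G.Connected) (hdeg : ∀ x, 0 < G.deg x)
    (SK SL : Finset V) (hKL : SK ⊆ SL)
    (hcK : G.ConnectedOn ↑SK) (hcL : G.ConnectedOn ↑SL)
    (a : V) (ha : a ∈ SK)
    (vK vL : V → K)
    (hvK : G.IsDirichletSol SK a vK) (hvL : G.IsDirichletSol SL a vL) :
    (G.lap vL a * G.deg a) / G.deg a ≤ (G.lap vK a * G.deg a) / G.deg a ∧
    (G.lap vK a * G.deg a) / G.deg a ≤ 1 ∧
    (1 : ℝ≥0∞) ≤ (ENNReal.ofReal (rp ((G.lap vK a * G.deg a) / G.deg a)))⁻¹ ∧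
    (ENNReal.ofReal (rp ((G.lap vK a * G.deg a) / G.deg a)))⁻¹ ≤
      (ENNReal.ofReal (rp ((G.lap vL a * G.deg a) / G.deg a)))⁻¹ :=
  cap_monotone_and_G_general G hdeg SK SL hKL hcK hcL a ha vK vL hvK hvL

end NAG
end
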